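/- There exists an infinite strictly decreasing sequence of terms under the cumulativity relation of ECC; that is, there are terms A_0 ≻ A_1 ≻ A_2 ≻ … where ≻ is the strict cumulativity order. -/

import Mathlib

namespace ECC

/-- Terms of Luo's Extended Calculus of Constructions, in de Bruijn representation. -/
inductive Term : Type
  | var   : ℕ → Term
  | prop  : Term
  | type  : ℕ → Term
  | pi    : Term → Term → Term
  | sigma : Term → Term → Term
  | lam   : Term → Term → Term
  | app   : Term → Term → Term
  | pair  : Term → Term → Term → Term   -- ⟨M, N⟩_B with type annotation B
  | proj1 : Term → Term
  | proj2 : Term → Term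
deriving DecidableEq

/-- Lift (shift by `d`) all de Bruijn indices ≥ `k`. -/
def lift (d : ℕ) : ℕ → Term → Term
  | k, .var n       => if n < k then .var n else .var (n + d)
  | _, .prop        => .prop
  | _, .type j      => .type j
  | k, .pi A B      => .pi (lift d k A) (lift d (k+1) B)
  | k, .sigma A B   => .sigma (lift d k A) (lift d (k+1) B)
  | k, .lam A M     => .lam (lift d k A) (lift d (k+1) M)
  | k, .app M N     => .app (lift d k M) (lift d k N)
  | k, .pair M N B  => .pair (lift d k M) (lift d k N) (lift d k B)
  | k, .proj1 M     => .proj1 (lift d k M)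
  | k, .proj2 M     => .proj2 (lift d k M)

/-- Capture-avoiding substitution `[N/x]A` of the term `N` for the variable `x` in `A`. -/
def subst (N : Term) : ℕ → Term → Term
  | k, .var n       => if n < k then .var n else if n = k then lift k 0 N else .var (n - 1)
  | _, .prop        => .prop
  | _, .type j      => .type j
  | k, .pi A B      => .pi (subst N k A) (subst N (k+1) B)
  | k, .sigma A B   => .sigma (subst N k A) (subst N (k+1) B)
  | k, .lam A M     => .lam (subst N k A) (subst N (k+1) M)
  | k, .app M M'    => .app (subst N k M) (subst N k M')
  | k, .pair M M' B => .pair (subst N k M) (subst N k M') (subst N k B)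
  | k, .proj1 M     => .proj1 (subst N k M)
  | k, .proj2 M     => .proj2 (subst N k M)

/-- `[N/x₀]B` : substitution for the outermost bound variable. -/
def subst0 (B N : Term) : Term := subst N 0 B

/-- One-step reduction (β together with the projection reductions, closed under all
term-formation congruences). -/
inductive Red : Term → Term → Prop
  | beta    : Red (.app (.lam A M) N) (subst0 M N)
  | pr1     : Red (.proj1 (.pair M N B)) M
  | pr2     : Red (.proj2 (.pair M N B)) N
  | piL     : Red A A' → Red (.pi A B) (.pi A' B)
  | piR     : Red B B' → Red (.pi A B) (.pi A B')
  | sigmaL  : Red A A' → Red (.sigma A B) (.sigma A' B)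
  | sigmaR  : Red B B' → Red (.sigma A B) (.sigma A B')
  | lamL    : Red A A' → Red (.lam A M) (.lam A' M)
  | lamR    : Red M M' → Red (.lam A M) (.lam A M')
  | appL    : Red M M' → Red (.app M N) (.app M' N)
  | appR    : Red N N' → Red (.app M N) (.app M N')
  | pairL   : Red M M' → Red (.pair M N B) (.pair M' N B)
  | pairR   : Red N N' → Red (.pair M N B) (.pair M N' B)
  | pairB   : Red B B' → Red (.pair M N B) (.pair M N B')
  | proj1C  : Red M M' → Red (.proj1 M) (.proj1 M')
  | proj2C  : Red M M' → Red (.proj2 M) (.proj2 M')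

/-- Conversion `≃` : the equivalence relation generated by reduction. -/
def Conv : Term → Term → Prop := Relation.EqvGen Red

/-- `A` has a normal form. -/
def HasNF (A : Term) : Prop :=
  ∃ B, Relation.ReflTransGen Red A B ∧ ∀ C, ¬ Red B C

/-- `𝒯` : the set of normalisable terms. -/
def Tset : Set Term := {A | HasNF A}

/-- Universes are `Prop` and the `Type_j`. -/
def IsUniv (T : Term) : Prop := T = .prop ∨ ∃ j, T = .type j

/-- The cumulativity relation `⪯` : the smallest preorder containing conversion,
the universe order, congruence for Π in the codomain, and congruence for Σ in both
components. -/
inductive Cum : Term → Term → Prop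
  | conv     : Conv A B → Cum A B
  | propType : Cum .prop (.type 0)
  | typeType : j ≤ k → Cum (.type j) (.type k)
  | pi       : Conv A A' → Cum B B' → Cum (.pi A B) (.pi A' B')
  | sigma    : Cum A A' → Cum B B' → Cum (.sigma A B) (.sigma A' B')
  | trans    : Cum A B → Cum B C → Cum A C

/-- The strict cumulativity relation `≺` : `A ⪯ B` and `A ≄ B`. -/
def SCum (A B : Term) : Prop := Cum A B ∧ ¬ Conv A B

/-- The stratified cumulativity relations `⪯ᵢ`. -/
inductive CumL : ℕ → Term → Term → Prop
  | conv     : Conv A B → CumL i A B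
  | propType : CumL i .prop (.type j)
  | typeType : j < k → CumL i (.type j) (.type k)
  | succ     : CumL i A B → CumL (i+1) A B
  | pi       : Conv M (.pi A B) → Conv N (.pi A' B') → Conv A A' → CumL i B B' →
               CumL (i+1) M N
  | sigma    : Conv M (.sigma A B) → Conv N (.sigma A' B') → CumL i A A' → CumL i B B' →
               CumL (i+1) M N

/-- Strict stratified cumulativity `≺ᵢ`. -/
def SCumL (i : ℕ) (A B : Term) : Prop := CumL i A B ∧ ¬ Conv A B

/-- Is the outermost symbol of a term Π or Σ? -/
def BinderHeaded : Term → Prop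
  | .pi _ _    => True
  | .sigma _ _ => True
  | _          => False

/-- The base stratum: normalisable terms not convertible to a binder-headed
normalisable term. -/
def Base : Set Term :=
  {T | HasNF T ∧ ¬ ∃ B, HasNF B ∧ BinderHeaded B ∧ Conv T B}

/-- The stratification `(Π_n, Σ_n)` of `𝒯`. -/
def Strata : ℕ → Set Term × Set Term
  | 0 => (Base, Base)
  | n+1 =>
    ({T | ∃ k l, ∃ _ : k + l = n, ∃ A B, HasNF (Term.pi A B) ∧ Conv T (Term.pi A B) ∧
        A ∈ (Strata k).1 ∪ (Strata k).2 ∧ B ∈ (Strata l).1 ∪ (Strata l).2},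
     {T | ∃ k l, ∃ _ : k + l = n, ∃ A B, HasNF (Term.sigma A B) ∧ Conv T (Term.sigma A B) ∧
        A ∈ (Strata k).1 ∪ (Strata k).2 ∧ B ∈ (Strata l).1 ∪ (Strata l).2})
termination_by n => n
decreasing_by all_goals omega

/-- The stratum `Π_n`. -/
def PiStr (n : ℕ) : Set Term := (Strata n).1

/-- The stratum `Σ_n`. -/
def SigStr (n : ℕ) : Set Term := (Strata n).2

/-- The specification of the rank function `φ : 𝒯 → ω`. -/
def PhiSpec (φ : Term → ℕ) : Prop :=
  (∀ M N, HasNF M → HasNF N → Conv M N → φ M = φ N) ∧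
  (∀ T, HasNF T → Conv T .prop → φ T = 2) ∧
  (∀ T j, HasNF T → Conv T (.type j) → φ T = 3 + j) ∧
  (∀ T, T ∈ PiStr 0 → ¬ Conv T .prop → (∀ j, ¬ Conv T (.type j)) → φ T = 1) ∧
  (∀ T A B, HasNF T → (Conv T (.pi A B) ∨ Conv T (.sigma A B)) → φ T = φ A * φ B) ∧
  (∀ T, HasNF T → 0 < φ T)

mutual
/-- Valid contexts of ECC (de Bruijn: the head of the list is the most recent entry). -/
inductive Valid : List Term → Prop
  | nil  : Valid []
  | cons : Typing Γ A (.type j) → Valid (A :: Γ)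

/-- The typing judgement `Γ ⊢ M : A` of ECC. -/
inductive Typing : List Term → Term → Term → Prop
  | prop  : Valid Γ → Typing Γ .prop (.type 0)
  | type  : Valid Γ → Typing Γ (.type j) (.type (j+1))
  | var   : Valid Γ → Γ[n]? = some A → Typing Γ (.var n) (lift (n+1) 0 A)
  | pi1   : Typing Γ A (.type j) → Typing (A :: Γ) B .prop →
            Typing Γ (.pi A B) .prop
  | pi2   : Typing Γ A (.type j) → Typing (A :: Γ) B (.type j) →
            Typing Γ (.pi A B) (.type j)
  | sig   : Typing Γ A (.type j) → Typing (A :: Γ) B (.type j) →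
            Typing Γ (.sigma A B) (.type j)
  | lam   : Typing (A :: Γ) M B → Typing Γ (.lam A M) (.pi A B)
  | app   : Typing Γ M (.pi A B) → Typing Γ N A → Typing Γ (.app M N) (subst0 B N)
  | pair  : Typing Γ M A → Typing Γ N (subst0 B M) → Typing (A :: Γ) B (.type j) →
            Typing Γ (.pair M N (.sigma A B)) (.sigma A B)
  | proj1 : Typing Γ M (.sigma A B) → Typing Γ (.proj1 M) A
  | proj2 : Typing Γ M (.sigma A B) → Typing Γ (.proj2 M) (subst0 B (.proj1 M))
  | cum   : Typing Γ M A → Typing Γ B (.type j) → Cum A B → Typing Γ M B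
end

/-- `Type_j` for `j ∈ ℤ`, with the convention `Type_{-1} = Prop`. -/
def TType (j : ℤ) : Term := if j < 0 then .prop else .type j.toNat

/-- The typing judgement of the restricted system `ECC⁻`: the rules
`(Π2)(Σ)(app)(pair)(⪯)` of ECC are replaced by `(Π2')(Σ')(app')(pair')` and `(≃)_ρ`. -/
inductive TypingM : List Term → Term → Term → Prop
  | prop  : Valid Γ → TypingM Γ .prop (.type 0)
  | type  : Valid Γ → TypingM Γ (.type j) (.type (j+1))
  | var   : Valid Γ → Γ[n]? = some A → TypingM Γ (.var n) (lift (n+1) 0 A)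
  | pi1   : TypingM Γ A (.type j) → TypingM (A :: Γ) B .prop →
            TypingM Γ (.pi A B) .prop
  | pi2'  : TypingM Γ A (TType j) → TypingM (A :: Γ) B (TType k) → 0 ≤ k →
            TypingM Γ (.pi A B) (TType (max (max j k) 0))
  | sig'  : TypingM Γ A (TType j) → TypingM (A :: Γ) B (TType k) →
            TypingM Γ (.sigma A B) (TType (max (max j k) 0))
  | lam   : TypingM (A :: Γ) M B → TypingM Γ (.lam A M) (.pi A B)
  | app'  : TypingM Γ M (.pi A B) → TypingM Γ N A' → Cum A' A →
            TypingM Γ (.app M N) (subst0 B N)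
  | pair' : TypingM Γ M A → TypingM Γ N C → TypingM (A' :: Γ) B' (.type j) →
            Cum A A' → Cum C (subst0 B' M) →
            TypingM Γ (.pair M N (.sigma A' B')) (.sigma A' B')
  | proj1 : TypingM Γ M (.sigma A B) → TypingM Γ (.proj1 M) A
  | proj2 : TypingM Γ M (.sigma A B) → TypingM Γ (.proj2 M) (subst0 B (.proj1 M))
  | conv  : TypingM Γ M A → Conv A A' → Typing Γ A' (.type j) → TypingM Γ M A'

end ECC

/-!
Let `α := λy:Type₀. Σx:Type₀. y y` and `Ω := α α`, so that `Ω ▷ Σx:Type₀. Ω`. Then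
`Σx:Prop. Ω ⪯ Σx:Type₀. Ω ≃ Ω`, and prefixing `n` copies of `Σx:Prop.` to both sides
gives `Aₙ₊₁ ⪯ Aₙ` for `Aₙ := (Σx:Prop.)ⁿ Ω`.

The steps are strict because, by Church–Rosser, convertible terms have a common parallel
reduct, while every parallel reduct of `Aₙ` has the shape `(Σx:Prop.)ⁿ (Σx:Type₀.)ᵏ Ω`,
from which `n` can be read off.
-/

namespace ECC

theorem lift_var (d k n : ℕ) : lift d k (.var n) = .var (if n < k then n else n + d) := by
  simp only [lift]; split_ifs <;> rfl

theorem lift_lift_of_le (N : Term) {d i j b : ℕ} (hb : b ≤ i) (hi : i ≤ b + j) :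
    lift d i (lift j b N) = lift (j + d) b N := by
  induction N generalizing i b with
  | var n => simp only [lift_var, Term.var.injEq]; split_ifs <;> omega
  | _ => simp only [lift] <;> congr 1 <;> apply_assumption <;> omega

theorem lift_lift_comm (N : Term) {d j b k : ℕ} (hb : b ≤ k) :
    lift j b (lift d k N) = lift d (j + k) (lift j b N) := by
  induction N generalizing b k with
  | var n => simp only [lift_var, Term.var.injEq]; split_ifs <;> omega
  | _ => simp only [lift] <;> congr 1 <;> apply_assumption <;> omega

/- The index variable `j` that moves under binders occurs bare on the left-hand side of the
next lemmas, so that `apply_assumption` can instantiate the induction hypotheses. -/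

theorem subst_lift_lift (M N : Term) {d k j : ℕ} :
    subst (lift d k N) j (lift d (k + j + 1) M) = lift d (k + j) (subst N j M) := by
  induction M generalizing j with
  | var n =>
    simp only [subst, lift_var]
    split_ifs <;> (try simp only [lift_var]) <;> (try split_ifs) <;>
      (try simp only [Term.var.injEq]) <;> try omega
    rw [Nat.add_comm k]
    exact lift_lift_comm N (Nat.zero_le k)
  | _ => simp only [lift, subst] <;> congr 1 <;> apply_assumption

theorem subst_lift_succ (M X : Term) {e i j : ℕ} (hi : i ≤ j) (hj : j ≤ i + e) :
    subst X j (lift (e + 1) i M) = lift e i M := by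
  induction M generalizing i j with
  | var n =>
    simp only [lift_var]
    split_ifs <;> simp only [subst] <;> split_ifs <;> first | rfl | omega
  | _ => simp only [lift, subst] <;> congr 1 <;> apply_assumption <;> omega

theorem lift_subst_comm (M N : Term) {d i j : ℕ} (hi : i ≤ j) :
    lift d i (subst N j M) = subst N (d + j) (lift d i M) := by
  induction M generalizing i j with
  | var n =>
    simp only [subst, lift_var]
    split_ifs <;> (try simp only [lift_var]) <;> (try split_ifs) <;>
      (try simp only [Term.var.injEq]) <;> try omega
    rw [Nat.add_comm d]
    exact lift_lift_of_le N (Nat.zero_le i) (by omega)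
  | _ => simp only [lift, subst] <;> congr 1 <;> apply_assumption <;> omega

theorem subst_subst (P N Q : Term) {j k : ℕ} :
    subst (subst N k Q) j (subst N (k + j + 1) P) = subst N (k + j) (subst Q j P) := by
  induction P generalizing j with
  | var n =>
    simp only [subst]
    split_ifs <;> (try simp only [subst]) <;> (try split_ifs) <;>
      (try simp only [Term.var.injEq]) <;> try omega
    · rw [Nat.add_comm k]
      exact lift_subst_comm Q N (Nat.zero_le k)
    · exact subst_lift_succ N _ (Nat.zero_le j) (by omega)
  | _ => simp only [subst] <;> congr 1 <;> apply_assumption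

inductive Par : Term → Term → Prop
  | var   : Par (.var n) (.var n)
  | prop  : Par .prop .prop
  | type  : Par (.type j) (.type j)
  | pi    : Par A A' → Par B B' → Par (.pi A B) (.pi A' B')
  | sigma : Par A A' → Par B B' → Par (.sigma A B) (.sigma A' B')
  | lam   : Par A A' → Par M M' → Par (.lam A M) (.lam A' M')
  | app   : Par M M' → Par N N' → Par (.app M N) (.app M' N')
  | pair  : Par M M' → Par N N' → Par B B' → Par (.pair M N B) (.pair M' N' B')
  | proj1 : Par M M' → Par (.proj1 M) (.proj1 M')
  | proj2 : Par M M' → Par (.proj2 M) (.proj2 M')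
  | beta  : Par M M' → Par N N' → Par (.app (.lam A M) N) (subst0 M' N')
  | pr1   : Par M M' → Par (.proj1 (.pair M N B)) M'
  | pr2   : Par N N' → Par (.proj2 (.pair M N B)) N'

namespace Par

@[refl]
theorem refl (M : Term) : Par M M := by
  induction M <;> constructor <;> assumption

theorem of_red {M N : Term} (h : Red M N) : Par M N := by
  induction h with
  | beta => exact beta (refl _) (refl _)
  | pr1 => exact pr1 (refl _)
  | pr2 => exact pr2 (refl _)
  | _ => constructor <;> first | assumption | rfl

theorem lift {M M' : Term} (h : Par M M') (d k : ℕ) :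
    Par (ECC.lift d k M) (ECC.lift d k M') := by
  induction h generalizing k with
  | var => exact refl _
  | beta _ _ ihM ihN =>
    simp only [ECC.lift]
    convert beta (ihM (k + 1)) (ihN k) using 2
    exact (subst_lift_lift _ _ (j := 0)).symm
  | _ => simp only [ECC.lift]; constructor <;> apply_assumption

theorem subst {M M' N N' : Term} (h : Par M M') (hN : Par N N') (k : ℕ) :
    Par (ECC.subst N k M) (ECC.subst N' k M') := by
  induction h generalizing k with
  | @var n =>
    simp only [ECC.subst]
    split_ifs
    exacts [var, hN.lift k 0, var]
  | beta _ _ ihM ihP =>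
    simp only [ECC.subst]
    convert beta (ihM (k + 1)) (ihP k) using 2
    exact (subst_subst _ _ _ (j := 0)).symm
  | _ => simp only [ECC.subst]; constructor <;> apply_assumption

end Par

/-- Complete development: all redexes of the term contracted at once. -/
def cd : Term → Term
  | .app (.lam _ M) N    => subst0 (cd M) (cd N)
  | .proj1 (.pair M _ _) => cd M
  | .proj2 (.pair _ N _) => cd N
  | .var n       => .var n
  | .prop        => .prop
  | .type j      => .type j
  | .pi A B      => .pi (cd A) (cd B)
  | .sigma A B   => .sigma (cd A) (cd B)
  | .lam A M     => .lam (cd A) (cd M)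
  | .app M N     => .app (cd M) (cd N)
  | .pair M N B  => .pair (cd M) (cd N) (cd B)
  | .proj1 M     => .proj1 (cd M)
  | .proj2 M     => .proj2 (cd M)

theorem Par.par_cd {M N : Term} (h : Par M N) : Par N (cd M) := by
  induction h with
  | beta _ _ ihM ihN => exact ihM.subst ihN 0
  | pr1 _ ih => exact ih
  | pr2 _ ih => exact ih
  | app hM _ ihM ihN =>
    cases hM with
    | lam _ _ => cases ihM with | lam _ ihBody => exact Par.beta ihBody ihN
    | _ => exact Par.app ihM ihN
  | proj1 hM ihM =>
    cases hM with
    | pair _ _ _ => cases ihM with | pair ih _ _ => exact Par.pr1 ih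
    | _ => exact Par.proj1 ihM
  | proj2 hM ihM =>
    cases hM with
    | pair _ _ _ => cases ihM with | pair _ ih _ => exact Par.pr2 ih
    | _ => exact Par.proj2 ihM
  | _ => constructor <;> assumption

theorem Conv.join_par {A B : Term} (h : Conv A B) :
    Relation.Join (Relation.ReflTransGen Par) A B := by
  have hequiv : Equivalence (Relation.Join (Relation.ReflTransGen Par)) :=
    Relation.equivalence_join_reflTransGen fun a _ _ hb hc =>
      ⟨cd a, .single hb.par_cd, .single hc.par_cd⟩
  refine hequiv.eqvGen_iff.mp (h.mono fun a b hab => ?_)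
  exact ⟨b, .single (Par.of_red hab), .refl⟩

theorem Par.iterate_sigma_inv {A U X : Term} (hA : ∀ A', Par A A' → A' = A) (n : ℕ)
    (h : Par ((Term.sigma A)^[n] U) X) : ∃ U', Par U U' ∧ X = (Term.sigma A)^[n] U' := by
  induction n generalizing X with
  | zero => exact ⟨X, h, rfl⟩
  | succ n ih =>
    rw [Function.iterate_succ_apply'] at h
    cases h with
    | sigma hA' hB =>
      obtain ⟨U', hU, rfl⟩ := ih hB
      rw [hA _ hA']
      exact ⟨U', hU, (Function.iterate_succ_apply' _ _ _).symm⟩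

theorem Par.eq_prop {X : Term} (h : Par .prop X) : X = .prop := by
  cases h; rfl

theorem Par.eq_type {j : ℕ} {X : Term} (h : Par (.type j) X) : X = .type j := by
  cases h; rfl

def alpha : Term := .lam (.type 0) (.sigma (.type 0) (.app (.var 1) (.var 1)))

def Omega : Term := .app alpha alpha

theorem red_Omega : Red Omega (.sigma (.type 0) Omega) :=
  Red.beta (A := .type 0) (M := .sigma (.type 0) (.app (.var 1) (.var 1))) (N := alpha)

theorem Par.eq_alpha {X : Term} (h : Par alpha X) : X = alpha := by
  cases h with | lam hA hM =>
  cases hA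
  cases hM with | sigma hA hB =>
  cases hA
  cases hB with | app h₁ h₂ =>
  cases h₁; cases h₂; rfl

theorem Par.Omega_cases {X : Term} (h : Par Omega X) :
    X = Omega ∨ X = .sigma (.type 0) Omega := by
  cases h with
  | app h₁ h₂ => rw [h₁.eq_alpha, h₂.eq_alpha]; exact .inl rfl
  | beta hM hN =>
    rw [hN.eq_alpha]
    cases hM with | sigma hA hB =>
    cases hA
    cases hB with | app h₁ h₂ =>
    cases h₁; cases h₂
    exact .inr rfl

theorem Par.exists_eq_unfold_Omega {k : ℕ} {X : Term}
    (h : Par ((Term.sigma (.type 0))^[k] Omega) X) :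
    ∃ k', X = (Term.sigma (.type 0))^[k'] Omega := by
  obtain ⟨U, hU, rfl⟩ := h.iterate_sigma_inv (fun _ => Par.eq_type) k
  rcases hU.Omega_cases with rfl | rfl
  exacts [⟨k, rfl⟩, ⟨k + 1, rfl⟩]

theorem exists_eq_sigma_prop_iterate_of_reflTransGen_par {n : ℕ} {X : Term}
    (h : Relation.ReflTransGen Par ((Term.sigma .prop)^[n] Omega) X) :
    ∃ k, X = (Term.sigma .prop)^[n] ((Term.sigma (.type 0))^[k] Omega) := by
  induction h with
  | refl => exact ⟨0, rfl⟩
  | tail _ hstep ih =>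
    obtain ⟨k, rfl⟩ := ih
    obtain ⟨U, hU, rfl⟩ := hstep.iterate_sigma_inv (fun _ => Par.eq_prop) n
    obtain ⟨k', rfl⟩ := hU.exists_eq_unfold_Omega
    exact ⟨k', rfl⟩

theorem sigma_prop_ne_unfold_Omega (T : Term) (k : ℕ) :
    Term.sigma .prop T ≠ (Term.sigma (.type 0))^[k] Omega := by
  cases k with
  | zero => exact fun h => Term.noConfusion h
  | succ k =>
    rw [Function.iterate_succ_apply']
    exact fun h => Term.noConfusion (Term.sigma.inj h).1

theorem not_conv_sigma_prop_iterate (n : ℕ) :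
    ¬ Conv ((Term.sigma .prop)^[n + 1] Omega) ((Term.sigma .prop)^[n] Omega) := by
  intro h
  obtain ⟨C, h₁, h₂⟩ := h.join_par
  obtain ⟨k, rfl⟩ := exists_eq_sigma_prop_iterate_of_reflTransGen_par h₁
  obtain ⟨k', hk'⟩ := exists_eq_sigma_prop_iterate_of_reflTransGen_par h₂
  rw [Function.iterate_succ_apply] at hk'
  have sigma_injective : Function.Injective (Term.sigma .prop) :=
    fun _ _ h => (Term.sigma.inj h).2
  exact sigma_prop_ne_unfold_Omega _ k' (sigma_injective.iterate n hk')

theorem Cum.refl (A : Term) : Cum A A :=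
  .conv (.refl A)

theorem Cum.iterate_sigma {X Y : Term} (h : Cum X Y) (A : Term) (n : ℕ) :
    Cum ((Term.sigma A)^[n] X) ((Term.sigma A)^[n] Y) := by
  induction n with
  | zero => exact h
  | succ n ih =>
    simp only [Function.iterate_succ_apply']
    exact .sigma (.refl A) ih

theorem cum_sigma_prop_Omega : Cum (.sigma .prop Omega) Omega :=
  .trans (.sigma .propType (.refl Omega)) (.conv (.symm _ _ (.rel _ _ red_Omega)))

end ECC

/-- There exists an infinite strictly decreasing sequence of terms under
the cumulativity relation of ECC: terms `A 0 ≻ A 1 ≻ A 2 ≻ …` where `≻` is the strict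
cumulativity order. -/
theorem exists_infinite_descending_cumulativity_chain :
    ∃ A : ℕ → ECC.Term, ∀ n, ECC.SCum (A (n+1)) (A n) := by
  refine ⟨fun n => (ECC.Term.sigma .prop)^[n] ECC.Omega,
    fun n => ⟨?_, ECC.not_conv_sigma_prop_iterate n⟩⟩
  dsimp only
  rw [Function.iterate_succ_apply]
  exact ECC.cum_sigma_prop_Omega.iterate_sigma .prop n
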